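/- arXiv:1509.08193 — 3 statements merged into one kernel-verified Lean document; each statement's English description precedes it below -/
import Mathlib

section
/- (Fundamental Budget Requirement) In a symmetric contract game with symmetric equilibrium effort $a^*$, if the estimation quality satisfies $\eta(a^*)\leq\epsilon$, then the budget of any ex ante individually rational contract is lower bounded by $B \geq \frac{n}{\alpha}f(\eta^{-1}(\epsilon))$. -/
open Finset

theorem card_div_mul_le_sum_of_forall_le_mul {ι : Type*} [Fintype ι] {α c : ℝ} (hα : 0 < α)
    (p : ι → ℝ) (hp : ∀ i, c ≤ α * p i) :
    (Fintype.card ι : ℝ) / α * c ≤ ∑ i, p i := by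
  have hle : ∀ i ∈ univ, c / α ≤ p i := fun i _ => by
    rw [div_le_iff₀' hα]
    exact hp i
  calc (Fintype.card ι : ℝ) / α * c = #(univ : Finset ι) • (c / α) := by
        rw [card_univ, nsmul_eq_mul]
        ring
    _ ≤ ∑ i, p i := card_nsmul_le_sum univ p (c / α) hle

theorem fundamental_budget_requirement_general (n : ℕ) (α ε : ℝ) (hα : 0 < α)
    (η f : ℝ → ℝ)
    (hηanti : StrictAntiOn η (Set.Ici 0))
    (hfmono : StrictMonoOn f (Set.Ici 0))
    (astar : ℝ) (hastar : 0 ≤ astar)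
    (Ep : Fin n → ℝ)
    (hIR : ∀ i, 0 ≤ α * Ep i - f astar)
    (B e : ℝ) (hB : B = ∑ i, Ep i)
    (he : 0 ≤ e) (hinv : η e = ε)
    (hquality : η astar ≤ ε) :
    (n : ℝ) / α * f e ≤ B := by
  have hea : e ≤ astar := (hηanti.le_iff_ge hastar he).1 (hinv ▸ hquality)
  have hfe : f e ≤ f astar := hfmono.monotoneOn he hastar hea
  calc (n : ℝ) / α * f e ≤ n / α * f astar := by gcongr
    _ ≤ ∑ i, Ep i := by
        simpa only [Fintype.card_fin] using card_div_mul_le_sum_of_forall_le_mul hα Ep fun i => sub_nonneg.1 (hIR i)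
    _ = B := hB.symm

/-- Fundamental Budget Requirement: in the symmetric contract game, if
the estimation quality at the symmetric equilibrium satisfies `η(a*) ≤ ε`, then the
budget of any ex ante individually rational contract is at least `(n/α) f(η⁻¹(ε))`. -/
theorem fundamental_budget_requirement (n : ℕ) (hn : 1 ≤ n) (α ε : ℝ) (hα : 0 < α)
    (η f : ℝ → ℝ)
    (hηanti : StrictAntiOn η (Set.Ici 0)) (hηcont : ContinuousOn η (Set.Ici 0))
    (hfmono : StrictMonoOn f (Set.Ici 0))
    (astar : ℝ) (hastar : 0 ≤ astar)
    (Ep : Fin n → ℝ) (hEp : ∀ i, 0 ≤ Ep i)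
    (hIR : ∀ i, 0 ≤ α * Ep i - f astar)
    (B e : ℝ) (hB : B = ∑ i, Ep i)
    (he : 0 ≤ e) (hinv : η e = ε)
    (hquality : η astar ≤ ε) :
    (n : ℝ) / α * f e ≤ B :=
  fundamental_budget_requirement_general n α ε hα η f hηanti hfmono astar hastar Ep hIR B e hB he
    hinv hquality
end

section
/- (Fundamental Performance Limit) In a symmetric contract game, any ex ante individually rational compensation contract with budget $B\leq\beta$ yields estimation quality $\mathbb{E}\{(x-\hat{x})^2\} \geq \eta(f^{-1}(\beta\alpha/n))$ at a symmetric equilibrium. -/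
open Finset

/-! Individual rationality makes each agent's expected payment cover the effort cost `f a*`
(scaled by `α`), so summing over the `n` agents gives `n f(a*) ≤ α B ≤ α β`. Hence
`f a* ≤ f(f⁻¹(βα/n))`, i.e. `a*` is at most the effort bought by the whole budget, and the
estimation error `η`, being decreasing in effort, is at least `η(f⁻¹(βα/n))`. -/

lemma card_mul_le_mul_sum {ι : Type*} [Fintype ι] {α c : ℝ} {p : ι → ℝ}
    (h : ∀ i, c ≤ α * p i) : Fintype.card ι * c ≤ α * ∑ i, p i := by
  calc (Fintype.card ι : ℝ) * c = ∑ _i : ι, c := by simp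
    _ ≤ ∑ i, α * p i := sum_le_sum fun i _ => h i
    _ = α * ∑ i, p i := (mul_sum _ _ _).symm

lemma le_div_of_card_mul_le {n : ℕ} (hn : 1 ≤ n) {α β B c : ℝ} (hα : 0 < α)
    (hcost : n * c ≤ α * B) (hBβ : B ≤ β) : c ≤ β * α / n := by
  have hnpos : (0 : ℝ) < n := by exact_mod_cast hn
  rw [le_div_iff₀ hnpos]
  nlinarith

theorem fundamental_performance_limit_general (n : ℕ) (hn : 1 ≤ n) (α β : ℝ) (hα : 0 < α)
    (η f : ℝ → ℝ)
    (hηanti : StrictAntiOn η (Set.Ici 0))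
    (hfmono : StrictMonoOn f (Set.Ici 0))
    (astar : ℝ) (hastar : 0 ≤ astar)
    (Ep : Fin n → ℝ)
    (hIR : ∀ i, 0 ≤ α * Ep i - f astar)
    (B af : ℝ) (hB : B = ∑ i, Ep i) (hBβ : B ≤ β)
    (haf : 0 ≤ af) (hfinv : f af = β * α / n) :
    η af ≤ η astar := by
  have hcost : n * f astar ≤ α * B := by
    simpa [hB] using card_mul_le_mul_sum fun i => sub_nonneg.mp (hIR i)
  have hf_le : f astar ≤ f af := hfinv ▸ le_div_of_card_mul_le hn hα hcost hBβ
  have heffort : astar ≤ af := (hfmono.le_iff_le hastar haf).mp hf_le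
  exact (hηanti.le_iff_ge haf hastar).mpr heffort

/-- Fundamental Performance Limit: in the symmetric contract game, any
ex ante individually rational contract with budget `B ≤ β` yields estimation error
`η(a*) ≥ η(f⁻¹(βα/n))` at the symmetric equilibrium. -/
theorem fundamental_performance_limit (n : ℕ) (hn : 1 ≤ n) (α β : ℝ) (hα : 0 < α)
    (η f : ℝ → ℝ)
    (hηanti : StrictAntiOn η (Set.Ici 0))
    (hfmono : StrictMonoOn f (Set.Ici 0)) (hfcont : ContinuousOn f (Set.Ici 0))
    (astar : ℝ) (hastar : 0 ≤ astar)
    (Ep : Fin n → ℝ) (hEp : ∀ i, 0 ≤ Ep i)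
    (hIR : ∀ i, 0 ≤ α * Ep i - f astar)
    (B af : ℝ) (hB : B = ∑ i, Ep i) (hBβ : B ≤ β)
    (haf : 0 ≤ af) (hfinv : f af = β * α / n) :
    η af ≤ η astar :=
  fundamental_performance_limit_general n hn α β hα η f hηanti hfmono astar hastar Ep hIR B af hB
    hBβ haf hfinv
end

section
/- With $\delta = \gamma\frac{n-1}{n}\epsilon + \frac{1}{\alpha}f(\eta^{-1}(\epsilon))$ and symmetric equilibrium efforts $a_i^* = \eta^{-1}(\epsilon)$ for all $i$, the total expected budget $B = \sum_{i=1}^n\big[\delta - \gamma\big(\big(\frac{n-1}{n}\big)^2\eta(a_i^*)+\frac{1}{n^2}\sum_{j\neq i}\eta(a_j^*)\big)\big]$ equals exactly $\frac{n}{\alpha}f(\eta^{-1}(\epsilon))$, i.e., the contract achieves the fundamental budget lower bound. -/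
open Finset

theorem Finset.sum_univ_erase_const {ι R : Type*} [Fintype ι] [DecidableEq ι] [Ring R]
    (i : ι) (c : R) : ∑ _j ∈ univ.erase i, c = ((Fintype.card ι : R) - 1) * c := by
  rw [sum_const, card_erase_of_mem (mem_univ i), card_univ, nsmul_eq_mul,
    Nat.cast_pred (Fintype.card_pos_iff.mpr ⟨i⟩)]

theorem sub_one_div_sq_mul_add_one_div_sq_mul {K : Type*} [Field K] {m : K} (hm : m ≠ 0)
    (x : K) : ((m - 1) / m) ^ 2 * x + 1 / m ^ 2 * ((m - 1) * x) = (m - 1) / m * x := by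
  field_simp
  ring

theorem optimal_contract_budget_general (n : ℕ) (α γ ε : ℝ)
    (η f : ℝ → ℝ) (e : ℝ) (hinv : η e = ε) :
    ∑ i : Fin n, ((γ * (((n : ℝ) - 1) / n) * ε + f e / α)
        - γ * ((((n : ℝ) - 1) / n) ^ 2 * η e
          + (1 / (n : ℝ) ^ 2) * ∑ _j ∈ Finset.univ.erase i, η e))
      = (n : ℝ) / α * f e := by
  have payment_eq : ∀ i : Fin n, (γ * (((n : ℝ) - 1) / n) * ε + f e / α)
      - γ * ((((n : ℝ) - 1) / n) ^ 2 * η e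
        + (1 / (n : ℝ) ^ 2) * ∑ _j ∈ Finset.univ.erase i, η e) = f e / α := by
    intro i
    have hn : (n : ℝ) ≠ 0 := Nat.cast_ne_zero.mpr i.pos.ne'
    rw [sum_univ_erase_const, Fintype.card_fin, sub_one_div_sq_mul_add_one_div_sq_mul hn, hinv]
    ring
  rw [sum_congr rfl fun i _ => payment_eq i, sum_const, card_univ, Fintype.card_fin, nsmul_eq_mul]
  ring

/-- with `δ = γ(n-1)ε/n + f(η⁻¹(ε))/α` and symmetric equilibrium efforts
`a* i = η⁻¹(ε)`, the total expected budget equals exactly `(n/α) f(η⁻¹(ε))`: the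
contract attains the fundamental budget lower bound. -/
theorem optimal_contract_budget (n : ℕ) (hn : 1 ≤ n) (α γ ε : ℝ) (hα : 0 < α)
    (hγ : 0 ≤ γ) (η f : ℝ → ℝ) (e : ℝ) (he : 0 ≤ e) (hinv : η e = ε) :
    ∑ i : Fin n, ((γ * (((n : ℝ) - 1) / n) * ε + f e / α)
        - γ * ((((n : ℝ) - 1) / n) ^ 2 * η e
          + (1 / (n : ℝ) ^ 2) * ∑ _j ∈ Finset.univ.erase i, η e))
      = (n : ℝ) / α * f e :=
  optimal_contract_budget_general n α γ ε η f e hinv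
end
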